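/- arXiv:1712.02589 — 2 statements merged into one kernel-verified Lean document; each statement's English description precedes it below -/
import Mathlib

section
/- Generalized extension theorem (finite-to-infinite direction for projective families of functionals): Let Λ be a set and for each finite Λ_k ⊆ Λ let T_{Λ_k}: ⊗_{α∈Λ_k}V_α → ℝ be bounded linear functionals satisfying T_{Λ_k}[ξ] = T_{Λ_ℓ}[ξ ⊗ (⊗_{α∈Λ_ℓ\Λ_k}I_α)] whenever Λ_k ⊆ Λ_ℓ. Then there exists a bounded linear functional T_Λ on the completion of the inductive-limit space L^♯_Λ such that T_Λ restricted to each finitely-supported element reproduces T_{Λ_k}: T_Λ[π⁻¹_{Λ_k}[ξ]] = T_{Λ_k}[ξ] for all finite Λ_k and ξ. -/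
/-!
The consistency condition says that `T s ξ` depends only on the embedded vector `J s ξ`: two
representatives are lifted to `V (s ∪ t)`, where they coincide because `J (s ∪ t)` is
injective. Since the index sets are directed, the embedded vectors already form a subspace, on
which the `T s` therefore glue to one linear functional, bounded by the uniform bound. A bounded
functional extends uniquely from a subspace to its closure.
-/

theorem Submodule.existsUnique_extend_topologicalClosure {𝕜 E F : Type*} [NormedField 𝕜]
    [SeminormedAddCommGroup E] [NormedSpace 𝕜 E] [NormedAddCommGroup F] [NormedSpace 𝕜 F]
    [CompleteSpace F] (S : Submodule 𝕜 E) (f : S →L[𝕜] F) :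
    ∃! g : S.topologicalClosure →L[𝕜] F, ∀ x : S, g ⟨x, S.le_topologicalClosure x.2⟩ = f x := by
  let ι : S →L[𝕜] S.topologicalClosure :=
    ⟨Submodule.inclusion S.le_topologicalClosure, continuous_inclusion S.le_topologicalClosure⟩
  have hdense : DenseRange ι :=
    (denseRange_inclusion_iff S.le_topologicalClosure).2 S.topologicalClosure_coe.subset
  have hind : IsUniformInducing ι :=
    (isUniformEmbedding_set_inclusion S.le_topologicalClosure).isUniformInducing
  refine ⟨f.extend ι, f.extend_eq hdense hind, fun g hg => ?_⟩
  exact (f.extend_unique hdense hind g (ContinuousLinearMap.ext hg)).symm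

namespace ProjectiveFamily

section Gluing

variable {R ι W M : Type*} {V : ι → Type*} [Semiring R]
  [∀ i, AddCommMonoid (V i)] [∀ i, Module R (V i)] [AddCommMonoid W] [Module R W]
  [AddCommMonoid M] [Module R M] {J : ∀ i, V i →ₗ[R] W} {T : ∀ i, V i →ₗ[R] M}

/-- The space `L^♯_Λ`. -/
abbrev limitSpace (J : ∀ i, V i →ₗ[R] W) : Submodule R W :=
  Submodule.span R {w : W | ∃ i ξ, J i ξ = w}

theorem embed_mem_limitSpace (i : ι) (ξ : V i) : J i ξ ∈ limitSpace J :=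
  Submodule.subset_span ⟨i, ξ, rfl⟩

variable [Preorder ι] [IsDirectedOrder ι] {π : ∀ i j : ι, i ≤ j → (V i →ₗ[R] V j)}

theorem exists_embed_eq_of_mem_limitSpace [Nonempty ι]
    (hJπ : ∀ (i j : ι) (h : i ≤ j) (ξ : V i), J j (π i j h ξ) = J i ξ)
    {w : W} (hw : w ∈ limitSpace J) : ∃ i ξ, J i ξ = w := by
  induction hw using Submodule.span_induction with
  | mem x hx => exact hx
  | zero => exact ⟨Classical.arbitrary ι, 0, map_zero _⟩
  | add x y _ _ hx hy =>
    obtain ⟨i, ξ, rfl⟩ := hx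
    obtain ⟨j, η, rfl⟩ := hy
    obtain ⟨k, hik, hjk⟩ := exists_ge_ge i j
    exact ⟨k, π i k hik ξ + π j k hjk η, by rw [map_add, hJπ, hJπ]⟩
  | smul a x _ hx =>
    obtain ⟨i, ξ, rfl⟩ := hx
    exact ⟨i, a • ξ, map_smul _ _ _⟩

theorem apply_eq_of_embed_eq
    (hJπ : ∀ (i j : ι) (h : i ≤ j) (ξ : V i), J j (π i j h ξ) = J i ξ)
    (hJinj : ∀ i, Function.Injective (J i))
    (hcons : ∀ (i j : ι) (h : i ≤ j) (ξ : V i), T i ξ = T j (π i j h ξ))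
    {i j : ι} {ξ : V i} {η : V j} (h : J i ξ = J j η) : T i ξ = T j η := by
  obtain ⟨k, hik, hjk⟩ := exists_ge_ge i j
  have hlift : π i k hik ξ = π j k hjk η := hJinj k (by rw [hJπ, hJπ, h])
  rw [hcons i k hik, hcons j k hjk, hlift]

variable [Nonempty ι]

noncomputable def glue (hJπ : ∀ (i j : ι) (h : i ≤ j) (ξ : V i), J j (π i j h ξ) = J i ξ)
    (T : ∀ i, V i →ₗ[R] M) (w : limitSpace J) : M :=
  have hrep := exists_embed_eq_of_mem_limitSpace hJπ w.2
  T hrep.choose hrep.choose_spec.choose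

theorem glue_eq (hJπ : ∀ (i j : ι) (h : i ≤ j) (ξ : V i), J j (π i j h ξ) = J i ξ)
    (hJinj : ∀ i, Function.Injective (J i))
    (hcons : ∀ (i j : ι) (h : i ≤ j) (ξ : V i), T i ξ = T j (π i j h ξ))
    {w : limitSpace J} {i : ι} {ξ : V i} (h : J i ξ = w) : glue hJπ T w = T i ξ :=
  have hrep := exists_embed_eq_of_mem_limitSpace hJπ w.2
  apply_eq_of_embed_eq hJπ hJinj hcons (hrep.choose_spec.choose_spec.trans h.symm)

noncomputable def gluedFunctional
    (hJπ : ∀ (i j : ι) (h : i ≤ j) (ξ : V i), J j (π i j h ξ) = J i ξ)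
    (hJinj : ∀ i, Function.Injective (J i))
    (hcons : ∀ (i j : ι) (h : i ≤ j) (ξ : V i), T i ξ = T j (π i j h ξ)) :
    limitSpace J →ₗ[R] M where
  toFun := glue hJπ T
  map_add' w₁ w₂ := by
    obtain ⟨i, ξ, h₁⟩ := exists_embed_eq_of_mem_limitSpace hJπ w₁.2
    obtain ⟨j, η, h₂⟩ := exists_embed_eq_of_mem_limitSpace hJπ w₂.2
    obtain ⟨k, hik, hjk⟩ := exists_ge_ge i j
    have hsum : J k (π i k hik ξ + π j k hjk η) = ↑(w₁ + w₂) := by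
      rw [map_add, hJπ, hJπ, h₁, h₂, Submodule.coe_add]
    rw [glue_eq hJπ hJinj hcons h₁, glue_eq hJπ hJinj hcons h₂, glue_eq hJπ hJinj hcons hsum,
      map_add, ← hcons, ← hcons]
  map_smul' a w := by
    obtain ⟨i, ξ, h⟩ := exists_embed_eq_of_mem_limitSpace hJπ w.2
    have hsmul : J i (a • ξ) = ↑(a • w) := by rw [map_smul, h, Submodule.coe_smul]
    rw [glue_eq hJπ hJinj hcons h, glue_eq hJπ hJinj hcons hsmul, map_smul, RingHom.id_apply]

theorem forall_eq_gluedFunctional_iff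
    (hJπ : ∀ (i j : ι) (h : i ≤ j) (ξ : V i), J j (π i j h ξ) = J i ξ)
    (hJinj : ∀ i, Function.Injective (J i))
    (hcons : ∀ (i j : ι) (h : i ≤ j) (ξ : V i), T i ξ = T j (π i j h ξ))
    (F : limitSpace J → M) :
    (∀ w, F w = gluedFunctional hJπ hJinj hcons w) ↔
      ∀ i ξ, F ⟨J i ξ, embed_mem_limitSpace i ξ⟩ = T i ξ := by
  constructor
  · intro hF i ξ
    exact (hF _).trans (glue_eq hJπ hJinj hcons rfl)
  · rintro hF ⟨w, hw⟩
    obtain ⟨i, ξ, rfl⟩ := exists_embed_eq_of_mem_limitSpace hJπ hw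
    exact (hF i ξ).trans (glue_eq hJπ hJinj hcons rfl).symm

end Gluing

theorem norm_gluedFunctional_le {R ι W M : Type*} {V : ι → Type*} [Ring R] [Preorder ι]
    [IsDirectedOrder ι] [Nonempty ι] [∀ i, AddCommMonoid (V i)] [∀ i, Module R (V i)]
    [SeminormedAddCommGroup W] [Module R W] [SeminormedAddCommGroup M] [Module R M]
    {π : ∀ i j : ι, i ≤ j → (V i →ₗ[R] V j)} {J : ∀ i, V i →ₗ[R] W} {T : ∀ i, V i →ₗ[R] M}
    (hJπ : ∀ (i j : ι) (h : i ≤ j) (ξ : V i), J j (π i j h ξ) = J i ξ)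
    (hJinj : ∀ i, Function.Injective (J i))
    (hcons : ∀ (i j : ι) (h : i ≤ j) (ξ : V i), T i ξ = T j (π i j h ξ))
    {C : ℝ} (hbound : ∀ i ξ, ‖T i ξ‖ ≤ C * ‖J i ξ‖) (w : limitSpace J) :
    ‖gluedFunctional hJπ hJinj hcons w‖ ≤ C * ‖w‖ := by
  obtain ⟨i, ξ, h⟩ := exists_embed_eq_of_mem_limitSpace hJπ w.2
  change ‖glue hJπ T w‖ ≤ C * ‖(w : W)‖
  rw [glue_eq hJπ hJinj hcons h, ← h]
  exact hbound i ξ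

end ProjectiveFamily

open ProjectiveFamily in
theorem generalized_extension_theorem_general {Λ : Type*} (V : Finset Λ → Type*)
    [∀ s, AddCommGroup (V s)] [∀ s, Module ℝ (V s)]
    {W : Type*} [NormedAddCommGroup W] [NormedSpace ℝ W]
    (π : ∀ s t : Finset Λ, s ⊆ t → (V s →ₗ[ℝ] V t))
    (J : ∀ s, V s →ₗ[ℝ] W)
    (hJπ : ∀ (s t : Finset Λ) (h : s ⊆ t) (ξ : V s), J t (π s t h ξ) = J s ξ)
    (hJinj : ∀ s, Function.Injective (J s))
    (T : ∀ s, V s →ₗ[ℝ] ℝ)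
    (hcons : ∀ (s t : Finset Λ) (h : s ⊆ t) (ξ : V s), T s ξ = T t (π s t h ξ))
    (C : ℝ)
    (hbound : ∀ (s : Finset Λ) (ξ : V s), |T s ξ| ≤ C * ‖J s ξ‖) :
    ∃! TΛ : (Submodule.span ℝ {w : W | ∃ s ξ, J s ξ = w}).topologicalClosure →L[ℝ] ℝ,
      ∀ (s : Finset Λ) (ξ : V s),
        TΛ ⟨J s ξ, Submodule.le_topologicalClosure _
          (Submodule.subset_span ⟨s, ξ, rfl⟩)⟩ = T s ξ := by
  let g : limitSpace J →L[ℝ] ℝ := (gluedFunctional hJπ hJinj hcons).mkContinuous C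
    (norm_gluedFunctional_le hJπ hJinj hcons fun s ξ => (Real.norm_eq_abs _).trans_le (hbound s ξ))
  refine (existsUnique_congr fun TΛ => ?_).mp
    ((limitSpace J).existsUnique_extend_topologicalClosure g)
  exact forall_eq_gluedFunctional_iff hJπ hJinj hcons (fun w => TΛ ⟨w, _⟩)

/-- Generalized extension theorem (finite-to-infinite direction for projective families of
functionals).  In the inductive-limit setting — V s models ⊗_{α∈s}V_α for finite s ⊆ Λ,
π s t the partial inverse projections (tensoring with identity elements I_α), W the normed
ambient space and J s the compatible norm-defining trivial extensions — if the bounded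
linear functionals T s satisfy the consistency condition T s = T t ∘ π s t and a uniform
bound |T s ξ| ≤ C‖J s ξ‖, then there exists a unique bounded linear functional T_Λ on the
topological closure of the span of the lifted elements L^♯_Λ reproducing every T s:
T_Λ[π⁻¹_{Λ_k}[ξ]] = T_{Λ_k}[ξ]. -/
theorem generalized_extension_theorem {Λ : Type*} (V : Finset Λ → Type*)
    [∀ s, AddCommGroup (V s)] [∀ s, Module ℝ (V s)]
    {W : Type*} [NormedAddCommGroup W] [NormedSpace ℝ W]
    (π : ∀ s t : Finset Λ, s ⊆ t → (V s →ₗ[ℝ] V t))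
    (J : ∀ s, V s →ₗ[ℝ] W)
    (hπcomp : ∀ (s t u : Finset Λ) (hst : s ⊆ t) (htu : t ⊆ u) (ξ : V s),
      π t u htu (π s t hst ξ) = π s u (hst.trans htu) ξ)
    (hJπ : ∀ (s t : Finset Λ) (h : s ⊆ t) (ξ : V s), J t (π s t h ξ) = J s ξ)
    (hJinj : ∀ s, Function.Injective (J s))
    (T : ∀ s, V s →ₗ[ℝ] ℝ)
    (hcons : ∀ (s t : Finset Λ) (h : s ⊆ t) (ξ : V s), T s ξ = T t (π s t h ξ))
    (C : ℝ)
    (hbound : ∀ (s : Finset Λ) (ξ : V s), |T s ξ| ≤ C * ‖J s ξ‖) :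
    ∃! TΛ : (Submodule.span ℝ {w : W | ∃ s ξ, J s ξ = w}).topologicalClosure →L[ℝ] ℝ,
      ∀ (s : Finset Λ) (ξ : V s),
        TΛ ⟨J s ξ, Submodule.le_topologicalClosure _
          (Submodule.subset_span ⟨s, ξ, rfl⟩)⟩ = T s ξ :=
  generalized_extension_theorem_general V π J hJπ hJinj T hcons C hbound
end

section
/- If a family of joint probability distributions {P_{Λ_k}} over finite time sets satisfies the Kolmogorov consistency condition (each P_{Λ_k} is the marginal of P_{Λ_ℓ} for Λ_k ⊆ Λ_ℓ), then the associated classical Choi matrices Υ^cl_{Λ_k} (defined as Σ P_{Λ_k}(i) ⊗_α (𝟙⊗|i_α⟩⟨i_α|)) satisfy the comb consistency condition: Υ^cl_{Λ_k} = tr_{Λ_ℓ\Λ_k}[(𝟙_{Λ_k} ⊗ (⊗_{α∈Λ_ℓ\Λ_k} Φ⁺_α)) Υ^cl_{Λ_ℓ}]. -/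
noncomputable section
open Matrix
open scoped Kronecker

/-- Tensor product of a family of matrices, realized entrywise on the function index type. -/
def tensorPow {ι : Type*} [Fintype ι] {β : Type*}
    (A : ι → Matrix β β ℂ) : Matrix (ι → β) (ι → β) ℂ :=
  fun r c => ∏ a, A a (r a) (c a)

/-- The unnormalized maximally entangled state Φ⁺ = Σᵢⱼ |ii⟩⟨jj| on ℂᵈ⊗ℂᵈ. -/
def PhiPlus (d : ℕ) : Matrix (Fin d × Fin d) (Fin d × Fin d) ℂ :=
  ∑ i, ∑ j, (Matrix.single i j (1 : ℂ)) ⊗ₖ (Matrix.single i j (1 : ℂ))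

/-- The classical Choi matrix Υ^cl = Σ_i P(i) ⊗_a (𝟙 ⊗ |i_a⟩⟨i_a|). -/
def clChoi {d : ℕ} {ι : Type*} [Fintype ι] [DecidableEq ι] (P : (ι → Fin d) → ℝ) :
    Matrix (ι → Fin d × Fin d) (ι → Fin d × Fin d) ℂ :=
  ∑ i : ι → Fin d, (P i : ℂ) •
    tensorPow (fun a => (1 : Matrix (Fin d) (Fin d) ℂ) ⊗ₖ Matrix.single (i a) (i a) (1 : ℂ))

/-- Merge an assignment on a finite subset s with one on its complement. -/
def merge {ι β : Type*} [DecidableEq ι] (s : Finset ι)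
    (r : {a // a ∈ s} → β) (f : {a // a ∉ s} → β) : ι → β :=
  fun a => if h : a ∈ s then r ⟨a, h⟩ else f ⟨a, h⟩

/-- Partial trace over the tensor factors corresponding to times outside s. -/
def ptr {ι β : Type*} [Fintype ι] [DecidableEq ι] [Fintype β] [DecidableEq β] (s : Finset ι)
    (M : Matrix (ι → β) (ι → β) ℂ) :
    Matrix ({a // a ∈ s} → β) ({a // a ∈ s} → β) ℂ :=
  fun r c => ∑ f : {a // a ∉ s} → β, M (merge s r f) (merge s c f)

/-! Every operator involved is a tensor power, and the partial trace of a tensor power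
factorises into the traces of the discarded factors. At a discarded time the factor is
`Φ⁺ (𝟙 ⊗ |i⟩⟨i|)`, whose trace is `1` whatever the outcome `i`; so the right-hand side is
`Σᵢ P_{Λℓ}(i) ⊗_{α ∈ Λk} (𝟙 ⊗ |iα⟩⟨iα|)`, and splitting `i` into its restriction to `Λk` and
the rest collects the coefficients into the marginals `P_{Λk}`. -/

section Merge

variable {ι β : Type*} [DecidableEq ι]

@[simp]
theorem merge_apply_mem (s : Finset ι) (g : {a // a ∈ s} → β) (f : {a // a ∉ s} → β)
    (b : {a // a ∈ s}) : merge s g f b = g b := by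
  simp [merge]

@[simp]
theorem merge_apply_not_mem (s : Finset ι) (g : {a // a ∈ s} → β) (f : {a // a ∉ s} → β)
    (b : {a // a ∉ s}) : merge s g f b = f b := by
  simp [merge, b.2]

theorem sum_eq_sum_sum_merge [Fintype ι] [Fintype β] {M : Type*} [AddCommMonoid M]
    (s : Finset ι) (F : (ι → β) → M) :
    ∑ i, F i = ∑ g : {a // a ∈ s} → β, ∑ f : {a // a ∉ s} → β, F (merge s g f) := by
  rw [← (Equiv.piEquivPiSubtypeProd (· ∈ s) fun _ => β).symm.sum_comp, Fintype.sum_prod_type]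
  rfl

end Merge

theorem tensorPow_mul {ι β : Type*} [Fintype ι] [DecidableEq ι] [Fintype β]
    (A B : ι → Matrix β β ℂ) :
    tensorPow A * tensorPow B = tensorPow fun a => A a * B a := by
  ext r c
  simp only [tensorPow, mul_apply, Finset.prod_univ_sum, Finset.prod_mul_distrib]
  rfl

section PartialTrace

variable {ι β : Type*} [Fintype ι] [DecidableEq ι] [Fintype β] [DecidableEq β]

theorem ptr_sum_smul {κ : Type*} [Fintype κ] (s : Finset ι) (c : κ → ℂ)
    (M : κ → Matrix (ι → β) (ι → β) ℂ) :
    ptr s (∑ k, c k • M k) = ∑ k, c k • ptr s (M k) := by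
  ext r c'
  simp only [ptr, Matrix.sum_apply, Matrix.smul_apply, smul_eq_mul, Finset.mul_sum]
  exact Finset.sum_comm

theorem ptr_tensorPow (s : Finset ι) (A : ι → Matrix β β ℂ) :
    ptr s (tensorPow A) =
      (∏ b : {a // a ∉ s}, (A b).trace) • tensorPow fun b : {a // a ∈ s} => A b := by
  ext r c
  simp only [ptr, tensorPow, Matrix.smul_apply, smul_eq_mul, Matrix.trace, Matrix.diag,
    ← Fintype.prod_subtype_mul_prod_subtype (· ∈ s), merge_apply_mem, merge_apply_not_mem,
    ← Finset.mul_sum, Fintype.prod_sum]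
  rw [mul_comm]
  -- `Fintype.prod_subtype_mul_prod_subtype` uses a different `Fintype` instance on `{a // a ∈ s}`
  congr
  exact Subsingleton.elim _ _

end PartialTrace

theorem trace_phiPlus_mul_one_kronecker_single {d : ℕ} (i : Fin d) :
    (PhiPlus d * ((1 : Matrix (Fin d) (Fin d) ℂ) ⊗ₖ single i i 1)).trace = 1 := by
  simp [PhiPlus, Finset.sum_mul, ← mul_kronecker_mul, trace_kronecker, trace_single_mul,
    single_apply, ite_and]

section Comb

variable {d : ℕ} {ι : Type*} [Fintype ι] [DecidableEq ι]

theorem ptr_phiPlus_mul_tensorPow_one_kronecker_single (s : Finset ι) (i : ι → Fin d) :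
    ptr s ((tensorPow fun a =>
        if a ∈ s then (1 : Matrix (Fin d × Fin d) (Fin d × Fin d) ℂ) else PhiPlus d) *
      tensorPow fun a => 1 ⊗ₖ single (i a) (i a) 1) =
      tensorPow fun b : {a // a ∈ s} => 1 ⊗ₖ single (i b) (i b) 1 := by
  rw [tensorPow_mul, ptr_tensorPow]
  have htrace : ∏ b : {a // a ∉ s}, ((if (b : ι) ∈ s then 1 else PhiPlus d) *
      ((1 : Matrix (Fin d) (Fin d) ℂ) ⊗ₖ single (i b) (i b) 1)).trace = 1 :=
    Finset.prod_eq_one fun b _ => by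
      rw [if_neg b.2, trace_phiPlus_mul_one_kronecker_single]
  rw [htrace, one_smul]
  congr with b : 1
  rw [if_pos b.2, one_mul]

theorem ptr_phiPlus_mul_clChoi (s : Finset ι) (P : (ι → Fin d) → ℝ) :
    ptr s ((tensorPow fun a =>
        if a ∈ s then (1 : Matrix (Fin d × Fin d) (Fin d × Fin d) ℂ) else PhiPlus d) *
      clChoi P) =
      ∑ i, (P i : ℂ) • tensorPow fun b : {a // a ∈ s} => 1 ⊗ₖ single (i b) (i b) 1 := by
  simp only [clChoi, Finset.mul_sum, Matrix.mul_smul, ptr_sum_smul,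
    ptr_phiPlus_mul_tensorPow_one_kronecker_single]

end Comb

/-- If a family of joint probability distributions is Kolmogorov consistent (P_{Λ_k} is the
marginal of P_{Λ_ℓ} for Λ_k ⊆ Λ_ℓ), then the associated classical Choi matrices satisfy the
comb consistency condition: Υ^cl_{Λ_k} = tr_{Λ_ℓ\Λ_k}[(𝟙_{Λ_k} ⊗ (⊗_{α∉Λ_k}Φ⁺)) Υ^cl_{Λ_ℓ}]. -/
theorem kolmogorov_consistency_implies_comb_consistency {d : ℕ} {ι : Type*}
    [Fintype ι] [DecidableEq ι] (s : Finset ι)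
    (Pl : (ι → Fin d) → ℝ) (Pk : ({a // a ∈ s} → Fin d) → ℝ)
    (hmarg : ∀ g : {a // a ∈ s} → Fin d,
      Pk g = ∑ f : {a // a ∉ s} → Fin d, Pl (merge s g f)) :
    clChoi Pk =
      ptr s ((tensorPow fun a =>
          if a ∈ s then (1 : Matrix (Fin d × Fin d) (Fin d × Fin d) ℂ) else PhiPlus d) *
        clChoi Pl) := by
  rw [ptr_phiPlus_mul_clChoi, sum_eq_sum_sum_merge s]
  simp only [clChoi, hmarg, Complex.ofReal_sum, Finset.sum_smul, merge_apply_mem]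
end
end
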